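/- For all α, β ∈ ℂ and all positive integers m, n: σ_{α,β}(n)·σ_{α,β}(m) = ∑_{d ∣ gcd(n,m)} d^{−α−β} σ_{α,β}(nm/d²). -/
import Mathlib

open Complex

/-- `σ_{α,β}(n) = ∑_{ad=n} a^{-α} d^{-β}`. -/
noncomputable def sigmaC (α β : ℂ) (n : ℕ) : ℂ :=
  ∑ d ∈ n.divisors, ((n / d : ℕ) : ℂ) ^ (-α) * (d : ℂ) ^ (-β)

private lemma nat_div_helper {g x y : ℕ} (hg : 0 < g) (h : x = g * y) : x / g = y := by
  subst h; exact Nat.mul_div_cancel_left y hg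

private lemma pos_left {a d n : ℕ} (h : a * d = n) (hn : 0 < n) : 0 < a := by
  rcases Nat.eq_zero_or_pos a with rfl | h'
  · simp at h; omega
  · exact h'

private lemma pos_right {a d n : ℕ} (h : a * d = n) (hn : 0 < n) : 0 < d :=
  pos_left (d := a) (by rw [mul_comm]; exact h) hn

private lemma cpow_natmul (a b : ℕ) (s : ℂ) : ((a * b : ℕ) : ℂ) ^ s = (a : ℂ) ^ s * (b : ℂ) ^ s := by
  push_cast
  exact Complex.natCast_mul_natCast_cpow a b s

private lemma sigmaC_eq (α β : ℂ) (n : ℕ) :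
    sigmaC α β n = ∑ p ∈ n.divisorsAntidiagonal, (p.1 : ℂ) ^ (-α) * (p.2 : ℂ) ^ (-β) := by
  rw [sigmaC, ← Nat.sum_divisorsAntidiagonal' (fun a d => (a : ℂ) ^ (-α) * (d : ℂ) ^ (-β))]

/-- For all `α, β ∈ ℂ` and positive integers `m, n`:
`σ_{α,β}(n)·σ_{α,β}(m) = ∑_{d ∣ gcd(n,m)} d^{−α−β} σ_{α,β}(nm/d²)`. -/
theorem sigma_mul_sigma (α β : ℂ) (m n : ℕ) (hm : 0 < m) (hn : 0 < n) :
    sigmaC α β n * sigmaC α β m =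
      ∑ d ∈ (Nat.gcd n m).divisors, (d : ℂ) ^ (-α - β) * sigmaC α β (n * m / d ^ 2) := by
  have hL : sigmaC α β n * sigmaC α β m =
      ∑ p ∈ n.divisorsAntidiagonal ×ˢ m.divisorsAntidiagonal,
        ((p.1.1 : ℂ) ^ (-α) * (p.1.2 : ℂ) ^ (-β)) * ((p.2.1 : ℂ) ^ (-α) * (p.2.2 : ℂ) ^ (-β)) := by
    rw [sigmaC_eq, sigmaC_eq, Finset.sum_mul_sum, Finset.sum_product]
  have hR : (∑ d ∈ (Nat.gcd n m).divisors, (d : ℂ) ^ (-α - β) * sigmaC α β (n * m / d ^ 2)) =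
      ∑ q ∈ (Nat.gcd n m).divisors.sigma (fun g => (n * m / g ^ 2).divisorsAntidiagonal),
        (q.1 : ℂ) ^ (-α - β) * ((q.2.1 : ℂ) ^ (-α) * (q.2.2 : ℂ) ^ (-β)) := by
    rw [Finset.sum_sigma]
    exact Finset.sum_congr rfl fun g hg => by rw [sigmaC_eq, Finset.mul_sum]
  rw [hL, hR]
  refine Finset.sum_nbij'
    (fun p => ⟨Nat.gcd p.1.1 p.2.2,
      (p.1.1 * p.2.1 / Nat.gcd p.1.1 p.2.2, p.1.2 * p.2.2 / Nat.gcd p.1.1 p.2.2)⟩)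
    (fun q => ((q.1 * (q.1 * q.2.1 / Nat.gcd (q.1 * q.2.1) m),
                n / (q.1 * (q.1 * q.2.1 / Nat.gcd (q.1 * q.2.1) m))),
               (Nat.gcd (q.1 * q.2.1) m / q.1, m / (Nat.gcd (q.1 * q.2.1) m / q.1))))
    ?_ ?_ ?_ ?_ ?_
  · -- forward membership
    rintro ⟨⟨a, d⟩, ⟨b, e⟩⟩ hp
    simp only [Finset.mem_product, Nat.mem_divisorsAntidiagonal] at hp
    obtain ⟨⟨hadn, -⟩, ⟨hbem, -⟩⟩ := hp
    have ha := pos_left hadn hn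
    have hd := pos_right hadn hn
    have hb := pos_left hbem hm
    have he := pos_right hbem hm
    dsimp only
    simp only [Finset.mem_sigma, Nat.mem_divisors, Nat.mem_divisorsAntidiagonal]
    set g := Nat.gcd a e with hgdef
    have hg : 0 < g := Nat.gcd_pos_of_pos_left e ha
    obtain ⟨a₀, ha₀⟩ : g ∣ a := by rw [hgdef]; exact Nat.gcd_dvd_left a e
    obtain ⟨e₀, he₀⟩ : g ∣ e := by rw [hgdef]; exact Nat.gcd_dvd_right a e
    have hgn : g ∣ n := ⟨a₀ * d, by rw [← hadn, ha₀]; ring⟩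
    have hgm : g ∣ m := ⟨b * e₀, by rw [← hbem, he₀]; ring⟩
    have hg2 : g ^ 2 ∣ n * m := by
      rw [pow_two]; exact mul_dvd_mul hgn hgm
    refine ⟨⟨Nat.dvd_gcd hgn hgm, (Nat.gcd_pos_of_pos_left m hn).ne'⟩, ?_, ?_⟩
    · have h1 : a * b / g = a₀ * b := nat_div_helper hg (by rw [ha₀]; ring)
      have h2 : d * e / g = d * e₀ := nat_div_helper hg (by rw [he₀]; ring)
      rw [h1, h2]
      symm
      exact nat_div_helper (by positivity) (by rw [← hadn, ← hbem, ha₀, he₀]; ring)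
    · exact (Nat.div_pos (Nat.le_of_dvd (by positivity) hg2) (by positivity)).ne'
  · -- backward membership
    rintro ⟨g, A, D⟩ hq
    simp only [Finset.mem_sigma, Nat.mem_divisors, Nat.mem_divisorsAntidiagonal] at hq
    obtain ⟨⟨hgdvd, -⟩, hADeq, hADne⟩ := hq
    have hgn : g ∣ n := hgdvd.trans (Nat.gcd_dvd_left n m)
    have hgm : g ∣ m := hgdvd.trans (Nat.gcd_dvd_right n m)
    have hg : 0 < g := Nat.pos_of_ne_zero (by rintro rfl; exact hn.ne' (Nat.eq_zero_of_zero_dvd hgn))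
    have hg2 : g ^ 2 ∣ n * m := by rw [pow_two]; exact mul_dvd_mul hgn hgm
    have hnm : g ^ 2 * (A * D) = n * m := by rw [hADeq]; exact Nat.mul_div_cancel' hg2
    have hA : 0 < A := pos_left hADeq (Nat.pos_of_ne_zero hADne)
    have hD : 0 < D := pos_right hADeq (Nat.pos_of_ne_zero hADne)
    set h := Nat.gcd (g * A) m with hhdef
    have hgh : g ∣ h := Nat.dvd_gcd (dvd_mul_right g A) hgm
    have hh : 0 < h := Nat.gcd_pos_of_pos_right _ hm
    obtain ⟨k, hk⟩ : h ∣ g * A := by rw [hhdef]; exact Nat.gcd_dvd_left _ _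
    obtain ⟨l, hl⟩ := hgh
    obtain ⟨s, hs⟩ : h ∣ m := by rw [hhdef]; exact Nat.gcd_dvd_right _ _
    have hk' : g * A / h = k := nat_div_helper hh hk
    have hl' : h / g = l := nat_div_helper hg hl
    have hl0 : 0 < l := pos_right hl.symm hh
    have hbm : l ∣ m := (Dvd.intro_left g hl.symm).trans ⟨s, hs⟩
    have hkey : n * h = (g * A) * Nat.gcd n (g * D) := by
      have h1 : (g * A) * n = n * (g * A) := mul_comm _ _
      have h2 : (g * A) * (g * D) = n * m := by rw [← hnm]; ring
      rw [← Nat.gcd_mul_left (g * A) n (g * D), h1, h2, Nat.gcd_mul_left, hhdef]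
    obtain ⟨t, ht⟩ : g ∣ Nat.gcd n (g * D) := Nat.dvd_gcd hgn (dvd_mul_right g D)
    have hn' : n = (g * k) * t := by
      apply Nat.eq_of_mul_eq_mul_right hh
      rw [mul_comm n h, mul_comm _ h, ← mul_assoc h, mul_comm h n, hkey, ht, hk]; ring
    dsimp only
    simp only [Finset.mem_product, Nat.mem_divisorsAntidiagonal, ← hhdef, hk', hl']
    refine ⟨⟨Nat.mul_div_cancel' ⟨t, hn'⟩, hn.ne'⟩, Nat.mul_div_cancel' hbm, hm.ne'⟩
  · -- left inverse
    rintro ⟨⟨a, d⟩, ⟨b, e⟩⟩ hp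
    simp only [Finset.mem_product, Nat.mem_divisorsAntidiagonal] at hp
    obtain ⟨⟨hadn, -⟩, ⟨hbem, -⟩⟩ := hp
    have ha := pos_left hadn hn
    have hb := pos_left hbem hm
    dsimp only
    set g := Nat.gcd a e with hgdef
    have hg : 0 < g := Nat.gcd_pos_of_pos_left e ha
    obtain ⟨a₀, ha₀⟩ : g ∣ a := by rw [hgdef]; exact Nat.gcd_dvd_left a e
    have h1 : g * (a * b / g) = a * b :=
      Nat.mul_div_cancel' (dvd_mul_of_dvd_left (by rw [hgdef]; exact Nat.gcd_dvd_left a e) b)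
    have hH : Nat.gcd (a * b) m = b * g := by
      rw [← hbem, show a * b = b * a from mul_comm a b, Nat.gcd_mul_left, hgdef]
    rw [h1, hH]
    rw [show b * g / g = b from nat_div_helper hg (mul_comm b g)]
    rw [show a * b / (b * g) = a₀ from nat_div_helper (by positivity) (by rw [ha₀]; ring)]
    rw [← ha₀]
    rw [show n / a = d from nat_div_helper ha hadn.symm,
        show m / b = e from nat_div_helper hb hbem.symm]
  · -- right inverse
    rintro ⟨g, A, D⟩ hq
    simp only [Finset.mem_sigma, Nat.mem_divisors, Nat.mem_divisorsAntidiagonal] at hq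
    obtain ⟨⟨hgdvd, -⟩, hADeq, hADne⟩ := hq
    have hgn : g ∣ n := hgdvd.trans (Nat.gcd_dvd_left n m)
    have hgm : g ∣ m := hgdvd.trans (Nat.gcd_dvd_right n m)
    have hg : 0 < g := Nat.pos_of_ne_zero (by rintro rfl; exact hn.ne' (Nat.eq_zero_of_zero_dvd hgn))
    have hg2 : g ^ 2 ∣ n * m := by rw [pow_two]; exact mul_dvd_mul hgn hgm
    have hnm : g ^ 2 * (A * D) = n * m := by rw [hADeq]; exact Nat.mul_div_cancel' hg2
    have hA : 0 < A := pos_left hADeq (Nat.pos_of_ne_zero hADne)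
    have hD : 0 < D := pos_right hADeq (Nat.pos_of_ne_zero hADne)
    dsimp only
    set h := Nat.gcd (g * A) m with hhdef
    have hgh : g ∣ h := Nat.dvd_gcd (dvd_mul_right g A) hgm
    have hh : 0 < h := Nat.gcd_pos_of_pos_right _ hm
    obtain ⟨k, hk⟩ : h ∣ g * A := by rw [hhdef]; exact Nat.gcd_dvd_left _ _
    obtain ⟨l, hl⟩ := hgh
    obtain ⟨s, hs⟩ : h ∣ m := by rw [hhdef]; exact Nat.gcd_dvd_right _ _
    have hk' : g * A / h = k := nat_div_helper hh hk
    have hl' : h / g = l := nat_div_helper hg hl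
    have hs' : m / h = s := nat_div_helper hh hs
    have hl0 : 0 < l := pos_right hl.symm hh
    have hk0 : 0 < k := pos_right hk.symm (by positivity)
    have hkey : n * h = (g * A) * Nat.gcd n (g * D) := by
      have h1 : (g * A) * n = n * (g * A) := mul_comm _ _
      have h2 : (g * A) * (g * D) = n * m := by rw [← hnm]; ring
      rw [← Nat.gcd_mul_left (g * A) n (g * D), h1, h2, Nat.gcd_mul_left, hhdef]
    obtain ⟨t, ht⟩ : g ∣ Nat.gcd n (g * D) := Nat.dvd_gcd hgn (dvd_mul_right g D)
    have hn' : n = (g * k) * t := by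
      apply Nat.eq_of_mul_eq_mul_right hh
      rw [mul_comm n h, mul_comm _ h, ← mul_assoc h, mul_comm h n, hkey, ht, hk]; ring
    have hA' : A = l * k := by
      apply Nat.eq_of_mul_eq_mul_left hg
      rw [hk, hl]; ring
    have he' : m / l = g * s := nat_div_helper hl0 (by rw [hs, hl]; ring)
    have hks : Nat.gcd k s = 1 := by
      have := Nat.coprime_div_gcd_div_gcd (m := g * A) (n := m) (by rw [← hhdef]; exact hh)
      rwa [← hhdef, hk', hs'] at this
    have hD' : D = t * s := by
      have h0 : 0 < g ^ 2 * A := by positivity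
      apply Nat.eq_of_mul_eq_mul_left h0
      calc g ^ 2 * A * D = n * m := by rw [← hnm]; ring
        _ = g ^ 2 * A * (t * s) := by rw [hn', hs, hl, hA']; ring
    rw [hk', hl', he']
    rw [show n / (g * k) = t from nat_div_helper (by positivity) hn']
    rw [show Nat.gcd (g * k) (g * s) = g from by rw [Nat.gcd_mul_left, hks, mul_one]]
    rw [show g * k * l / g = A from nat_div_helper hg (by rw [hA']; ring)]
    rw [show t * (g * s) / g = D from nat_div_helper hg (by rw [hD']; ring)]
  · -- term equality
    rintro ⟨⟨a, d⟩, ⟨b, e⟩⟩ hp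
    simp only [Finset.mem_product, Nat.mem_divisorsAntidiagonal] at hp
    obtain ⟨⟨hadn, -⟩, ⟨hbem, -⟩⟩ := hp
    have ha := pos_left hadn hn
    dsimp only
    set g := Nat.gcd a e with hgdef
    have hg : 0 < g := Nat.gcd_pos_of_pos_left e ha
    obtain ⟨a₀, ha₀⟩ : g ∣ a := by rw [hgdef]; exact Nat.gcd_dvd_left a e
    obtain ⟨e₀, he₀⟩ : g ∣ e := by rw [hgdef]; exact Nat.gcd_dvd_right a e
    have h1 : a * b / g = a₀ * b := nat_div_helper hg (by rw [ha₀]; ring)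
    have h2 : d * e / g = d * e₀ := nat_div_helper hg (by rw [he₀]; ring)
    have hgC : (g : ℂ) ≠ 0 := Nat.cast_ne_zero.2 hg.ne'
    rw [h1, h2, ha₀, he₀, cpow_natmul g a₀, cpow_natmul g e₀, cpow_natmul a₀ b (-α),
        cpow_natmul d e₀ (-β), show -α - β = -α + -β from by ring, Complex.cpow_add _ _ hgC]
    ring
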